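/- arXiv:1512.03393 — 4 statements merged into one kernel-verified Lean document; each statement's English description precedes it below -/
import Mathlib

section
/- Let K be an infinite field, n, m, d ≥ 1, let X = (X₁,…,X_m) ∈ Mat_{n,n}(K)^m, and let 𝒳 ⊆ Mat_{n,n}(K) be the K-linear span of X₁,…,X_m. Then the following are equivalent: (1) there exists an m-tuple T = (T₁,…,T_m) ∈ Mat_{d,d}(K)^m such that det(X₁⊗T₁ + ⋯ + X_m⊗T_m) ≠ 0; (2) rank(𝒳^{d}) = dn. -/
open Matrix Kronecker

/-- The `(p,q)` tensor blow-up of a linear subspace of matrices: the span of all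
Kronecker products `A ⊗ₖ T` with `A ∈ 𝒳` and `T` a `p × q` matrix. -/
def blowUp {K : Type} [Field K] {a b : Type} [Fintype a] [Fintype b]
    (𝒳 : Submodule K (Matrix a b K)) (p q : ℕ) :
    Submodule K (Matrix (a × Fin p) (b × Fin q) K) :=
  Submodule.span K {M | ∃ A ∈ 𝒳, ∃ T : Matrix (Fin p) (Fin q) K, M = A ⊗ₖ T}

/-- The rank of a linear subspace of matrices: the maximal rank of a member. -/
noncomputable def spaceRank {K : Type} [Field K] {a b : Type} [Fintype a] [Fintype b]
    (𝒴 : Submodule K (Matrix a b K)) : ℕ :=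
  sSup (Matrix.rank '' (𝒴 : Set (Matrix a b K)))

lemma mem_blowUp_span_iff {K : Type} [Field K] {n m d : ℕ}
    (X : Fin m → Matrix (Fin n) (Fin n) K)
    (M : Matrix (Fin n × Fin d) (Fin n × Fin d) K) :
    M ∈ blowUp (Submodule.span K (Set.range X)) d d ↔
      ∃ T : Fin m → Matrix (Fin d) (Fin d) K, M = ∑ i, X i ⊗ₖ T i := by
  constructor
  · intro hM
    -- blowUp ≤ range of the linear map T ↦ ∑ Xᵢ ⊗ Tᵢ
    let φ : (Fin m → Matrix (Fin d) (Fin d) K) →ₗ[K]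
        Matrix (Fin n × Fin d) (Fin n × Fin d) K :=
      { toFun := fun T => ∑ i, X i ⊗ₖ T i
        map_add' := by
          intro T T'
          rw [← Finset.sum_add_distrib]
          refine Finset.sum_congr rfl fun i _ => ?_
          simp [Matrix.kronecker_add]
        map_smul' := by
          intro c T
          simp only [Pi.smul_apply, RingHom.id_apply, Finset.smul_sum,
            Matrix.kronecker_smul] }
    have hle : blowUp (Submodule.span K (Set.range X)) d d ≤ LinearMap.range φ := by
      rw [blowUp, Submodule.span_le]
      rintro M ⟨A, hA, T, rfl⟩
      rw [Submodule.mem_span_range_iff_exists_fun] at hA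
      obtain ⟨c, hc⟩ := hA
      refine ⟨fun i => c i • T, ?_⟩
      show ∑ i, X i ⊗ₖ (c i • T) = A ⊗ₖ T
      rw [← hc]
      ext ⟨a, p⟩ ⟨b, q⟩
      simp only [Matrix.sum_apply, Matrix.kroneckerMap_apply, Matrix.smul_apply,
        smul_eq_mul, Finset.sum_mul]
      exact Finset.sum_congr rfl fun i _ => by ring
    obtain ⟨T, hT⟩ := hle hM
    exact ⟨T, hT.symm⟩
  · rintro ⟨T, rfl⟩
    refine Submodule.sum_mem _ fun i _ => ?_
    exact Submodule.subset_span ⟨X i, Submodule.subset_span ⟨i, rfl⟩, T i, rfl⟩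

lemma det_ne_zero_iff_rank_eq_card {K : Type} [Field K] {a : Type} [Fintype a] [DecidableEq a]
    (A : Matrix a a K) : A.det ≠ 0 ↔ A.rank = Fintype.card a := by
  constructor
  · intro h
    exact Matrix.rank_of_isUnit A ((Matrix.isUnit_iff_isUnit_det A).mpr h.isUnit)
  · intro h hdet
    obtain ⟨v, hv0, hv⟩ := (Matrix.exists_mulVec_eq_zero_iff).mpr hdet
    have hker : v ∈ LinearMap.ker A.mulVecLin := by simpa using hv
    have hrn := A.mulVecLin.finrank_range_add_finrank_ker
    rw [Matrix.rank] at h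
    rw [h, Module.finrank_fintype_fun_eq_card] at hrn
    have : Module.finrank K (LinearMap.ker A.mulVecLin) = 0 := by omega
    rw [Submodule.finrank_eq_zero] at this
    rw [this, Submodule.mem_bot] at hker
    exact hv0 hker

theorem statement5 (K : Type) [Field K] [Infinite K] (n m d : ℕ)
    (hn : 1 ≤ n) (hm : 1 ≤ m) (hd : 1 ≤ d)
    (X : Fin m → Matrix (Fin n) (Fin n) K) :
    (∃ T : Fin m → Matrix (Fin d) (Fin d) K, (∑ i, X i ⊗ₖ T i).det ≠ 0) ↔
    spaceRank (blowUp (Submodule.span K (Set.range X)) d d) = d * n := by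
  have hcard : Fintype.card (Fin n × Fin d) = d * n := by
    simp [Fintype.card_prod, mul_comm]
  set ranks : Set ℕ :=
    Matrix.rank '' ((blowUp (Submodule.span K (Set.range X)) d d :
      Set (Matrix (Fin n × Fin d) (Fin n × Fin d) K))) with hranks
  have hub : ∀ r ∈ ranks, r ≤ d * n := by
    rintro r ⟨M, _, rfl⟩
    calc M.rank ≤ Fintype.card (Fin n × Fin d) := Matrix.rank_le_card_width M
    _ = d * n := hcard
  have hbdd : BddAbove ranks := ⟨d * n, fun r hr => hub r hr⟩
  constructor
  · rintro ⟨T, hT⟩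
    have hmem : (∑ i, X i ⊗ₖ T i) ∈ blowUp (Submodule.span K (Set.range X)) d d :=
      (mem_blowUp_span_iff X _).mpr ⟨T, rfl⟩
    have hrank : (∑ i, X i ⊗ₖ T i).rank = d * n := by
      rw [(det_ne_zero_iff_rank_eq_card _).mp hT, hcard]
    have hmemr : d * n ∈ ranks := ⟨_, hmem, hrank⟩
    exact le_antisymm (csSup_le ⟨_, hmemr⟩ hub) (le_csSup hbdd hmemr)
  · intro h
    have hne : ranks.Nonempty :=
      ⟨0, ⟨0, (blowUp (Submodule.span K (Set.range X)) d d).zero_mem, Matrix.rank_zero⟩⟩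
    have hmem : d * n ∈ ranks := by
      rw [spaceRank, ← hranks] at h
      rw [← h]
      exact Nat.sSup_mem hne hbdd
    obtain ⟨M, hM, hMr⟩ := hmem
    obtain ⟨T, rfl⟩ := (mem_blowUp_span_iff X M).mp hM
    refine ⟨T, (det_ne_zero_iff_rank_eq_card _).mpr ?_⟩
    rw [hMr, hcard]
end

section
/- Let K be an infinite field, let 𝒳 ⊆ Mat_{k,n}(K) be a K-linear subspace, and define r(p,q) = rank(𝒳^{p,q}). Then r is weakly concave in each variable: 2·r(p,q+1) ≥ r(p,q) + r(p,q+2) and 2·r(p+1,q) ≥ r(p,q) + r(p+2,q) for all p, q ≥ 1. -/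
open Matrix Kronecker

/-!
Take `A ∈ 𝒳^{p,q}` and `B₀ ∈ 𝒳^{p,q+2}` of maximal rank and pad `A` with two zero column blocks
to `A' ∈ 𝒳^{p,q+2}`. Rank is lower semicontinuous along a line (a nonvanishing minor stays
nonvanishing off the finitely many roots of a polynomial), so since `K` is infinite some
`B = B₀ + μ A'` still has rank `r(p,q+2)` while its first `q` column blocks, `μ A` plus those of
`B₀`, have rank at least `r(p,q)`. Deleting the last, resp. the penultimate, column block of `B` leaves two members
of `𝒳^{p,q+1}`; their column sets cover all columns and share the first `q` blocks, so
submodularity of the dimension of spans gives `r(p,q) + r(p,q+2) ≤ 2 r(p,q+1)`. Transposition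
identifies `𝒳^{p,q}` with `(𝒳ᵀ)^{q,p}`, which turns this into the statement about rows.
-/

open Module Submodule

theorem finrank_span_union_add_finrank_span_inter_le {K V : Type*} [Field K] [AddCommGroup V]
    [Module K V] [FiniteDimensional K V] (s t : Set V) :
    finrank K (span K (s ∪ t)) + finrank K (span K (s ∩ t)) ≤
      finrank K (span K s) + finrank K (span K t) := by
  rw [span_union, ← finrank_sup_add_finrank_inf_eq (span K s)]
  have hinter : span K (s ∩ t) ≤ span K s ⊓ span K t :=
    span_le.2 fun v hv => mem_inf.2 ⟨subset_span hv.1, subset_span hv.2⟩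
  exact Nat.add_le_add_left (finrank_mono hinter) _

theorem Fin.range_castSucc_union_range_succAbove (q : ℕ) :
    Set.range (Fin.castSucc : Fin (q + 1) → Fin (q + 2)) ∪
      Set.range (Fin.succAbove (Fin.last q).castSucc) = Set.univ := by
  refine Set.eq_univ_of_forall fun j => ?_
  by_cases hj : j = (Fin.last q).castSucc
  · exact Or.inl ⟨Fin.last q, hj.symm⟩
  · exact Or.inr (Fin.exists_succAbove_eq hj)

theorem Fin.range_castAdd_subset_range_castSucc_inter_range_succAbove (q : ℕ) :
    Set.range (Fin.castAdd 2 : Fin q → Fin (q + 2)) ⊆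
      Set.range (Fin.castSucc : Fin (q + 1) → Fin (q + 2)) ∩
        Set.range (Fin.succAbove (Fin.last q).castSucc) := by
  rintro _ ⟨j, rfl⟩
  refine ⟨⟨Fin.castAdd 1 j, rfl⟩, Fin.exists_succAbove_eq fun h => ?_⟩
  exact j.isLt.ne (by simpa using congrArg Fin.val h)

namespace Matrix

variable {K m n : Type*} [Field K] [Fintype m] [Fintype n]

theorem exists_linearIndependent_cols (M : Matrix m n K) :
    ∃ g : Fin M.rank → n, LinearIndependent K (M.col ∘ g) := by
  obtain ⟨κ, a, -, hspan, hli⟩ := exists_linearIndependent' K M.col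
  have := hli.finite
  have := Fintype.ofFinite κ
  have hcard : Fintype.card κ = M.rank := by
    rw [rank_eq_finrank_span_cols, ← hspan, finrank_span_eq_card hli]
  let e : Fin M.rank ≃ κ := (Fintype.equivFinOfCardEq hcard).symm
  exact ⟨a ∘ e, hli.comp e e.injective⟩

theorem exists_det_submatrix_ne_zero (M : Matrix m n K) :
    ∃ (f : Fin M.rank → m) (g : Fin M.rank → n), (M.submatrix f g).det ≠ 0 := by
  obtain ⟨g, hg⟩ := M.exists_linearIndependent_cols
  have hrank : (M.submatrix id g)ᵀ.rank = M.rank := by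
    rw [rank_transpose, rank_eq_finrank_span_cols]
    exact (finrank_span_eq_card hg).trans (Fintype.card_fin _)
  obtain ⟨f, hf⟩ := (M.submatrix id g)ᵀ.exists_linearIndependent_cols
  refine ⟨f ∘ Fin.cast hrank.symm, g, ?_⟩
  have hrows : LinearIndependent K (M.submatrix (f ∘ Fin.cast hrank.symm) g).row :=
    hf.comp _ (Fin.cast_injective _)
  exact ((isUnit_iff_isUnit_det _).1 (linearIndependent_rows_iff_isUnit.1 hrows)).ne_zero

theorem finite_setOf_rank_add_smul_lt (M N : Matrix m n K) :
    {μ : K | (M + μ • N).rank < M.rank}.Finite := by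
  classical
  obtain ⟨f, g, hdet⟩ := M.exists_det_submatrix_ne_zero
  set P : Polynomial K :=
    ((Polynomial.X : Polynomial K) • (N.submatrix f g).map Polynomial.C +
      (M.submatrix f g).map Polynomial.C).det
  have hP : P ≠ 0 := fun h => hdet <| by
    rw [← Polynomial.coeff_det_X_add_C_zero (N.submatrix f g)]
    change P.coeff 0 = 0
    rw [h, Polynomial.coeff_zero]
  have heval (μ : K) : P.eval μ = ((M + μ • N).submatrix f g).det := by
    rw [← Polynomial.coe_evalRingHom, RingHom.map_det]
    congr 1
    ext i j
    simp only [RingHom.mapMatrix_apply, Polynomial.coe_evalRingHom, map_apply, add_apply,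
      smul_apply, submatrix_apply, smul_eq_mul, Polynomial.eval_add, Polynomial.eval_mul,
      Polynomial.eval_C, Polynomial.eval_X]
    ring
  refine (Polynomial.finite_setOfPred_isRoot hP).subset fun μ hμ => ?_
  by_contra hroot
  rw [Set.mem_ofPred_eq, Polynomial.IsRoot.def, heval] at hroot
  have := ((M + μ • N).rank_submatrix_le f g).trans_lt hμ
  rw [rank_of_det_ne_zero hroot, Fintype.card_fin] at this
  exact this.false

theorem finite_setOf_rank_smul_add_lt (M N : Matrix m n K) :
    {μ : K | (μ • M + N).rank < M.rank}.Finite := by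
  refine (((finite_setOf_rank_add_smul_lt M N).image (·⁻¹)).insert 0).subset fun μ hμ => ?_
  by_cases hμ0 : μ = 0
  · exact Or.inl hμ0
  · refine Or.inr ⟨μ⁻¹, ?_, inv_inv μ⟩
    have hsmul : μ • M + N = μ • (M + μ⁻¹ • N) := by
      rw [smul_add, smul_smul, mul_inv_cancel₀ hμ0, one_smul]
    rwa [Set.mem_ofPred_eq, hsmul,
      rank_smul_of_mem_nonZeroDivisors _ (mem_nonZeroDivisors_of_ne_zero hμ0)] at hμ

omit [Fintype m] [Fintype n] in
theorem rank_submatrix_id_eq_finrank_span_image {ι : Type*} [Fintype ι] (M : Matrix m n K)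
    (g : ι → n) : (M.submatrix id g).rank = finrank K (span K (M.col '' Set.range g)) := by
  rw [rank_eq_finrank_span_cols, ← Set.range_comp]
  rfl

theorem rank_add_rank_submatrix_le {ι₀ ι₁ ι₂ : Type*} [Fintype ι₀] [Fintype ι₁]
    [Fintype ι₂] (M : Matrix m n K) (g₀ : ι₀ → n) (g₁ : ι₁ → n) (g₂ : ι₂ → n)
    (hcover : Set.range g₁ ∪ Set.range g₂ = Set.univ)
    (hinter : Set.range g₀ ⊆ Set.range g₁ ∩ Set.range g₂) :
    M.rank + (M.submatrix id g₀).rank ≤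
      (M.submatrix id g₁).rank + (M.submatrix id g₂).rank := by
  simp only [rank_submatrix_id_eq_finrank_span_image]
  calc M.rank + finrank K (span K (M.col '' Set.range g₀))
      ≤ finrank K (span K (M.col '' Set.range g₁ ∪ M.col '' Set.range g₂)) +
          finrank K (span K (M.col '' Set.range g₁ ∩ M.col '' Set.range g₂)) := by
        rw [← Set.image_union, hcover, Set.image_univ, rank_eq_finrank_span_cols]
        exact Nat.add_le_add_left (finrank_mono (span_mono
          ((Set.image_mono hinter).trans (Set.image_inter_subset _ _ _)))) _
    _ ≤ _ := finrank_span_union_add_finrank_span_inter_le _ _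

theorem submatrix_id_prodMap_eq_mul_one_kronecker {R l ι κ : Type*} [CommSemiring R]
    [Fintype ι] [DecidableEq n] [DecidableEq ι] (M : Matrix l (n × ι) R) (g : κ → ι) :
    M.submatrix id (Prod.map id g) =
      M * ((1 : Matrix n n R) ⊗ₖ (1 : Matrix ι ι R).submatrix id g) := by
  rw [kroneckerMap_submatrix_right, one_kronecker_one, Prod.map_id]
  exact (mul_submatrix_one (Equiv.refl _) _ M).symm

theorem submatrix_mul_one_kronecker_submatrix_one {R l ι κ : Type*} [CommSemiring R]
    [Fintype ι] [Fintype κ] [DecidableEq n] [DecidableEq ι] [DecidableEq κ]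
    (M : Matrix l (n × ι) R) {e : ι → κ} (he : Function.Injective e) :
    (M * ((1 : Matrix n n R) ⊗ₖ (1 : Matrix κ κ R).submatrix e id)).submatrix id
      (Prod.map id e) = M := by
  rw [submatrix_id_prodMap_eq_mul_one_kronecker, Matrix.mul_assoc, ← mul_kronecker_mul,
    Matrix.one_mul, ← Equiv.coe_refl, mul_submatrix_one, submatrix_submatrix]
  simp [submatrix_one e he]

end Matrix

section BlowUp

variable {K : Type} [Field K] {a b : Type} [Fintype a] [Fintype b]

theorem rank_le_spaceRank {𝒴 : Submodule K (Matrix a b K)} {M : Matrix a b K} (hM : M ∈ 𝒴) :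
    M.rank ≤ spaceRank 𝒴 :=
  le_csSup ⟨Fintype.card b, by rintro _ ⟨N, -, rfl⟩; exact N.rank_le_card_width⟩
    (Set.mem_image_of_mem _ hM)

theorem exists_rank_eq_spaceRank (𝒴 : Submodule K (Matrix a b K)) :
    ∃ M ∈ 𝒴, M.rank = spaceRank 𝒴 :=
  Nat.sSup_mem ⟨_, Set.mem_image_of_mem _ 𝒴.zero_mem⟩
    ⟨Fintype.card b, by rintro _ ⟨N, -, rfl⟩; exact N.rank_le_card_width⟩

theorem spaceRank_map_transpose (𝒴 : Submodule K (Matrix a b K)) :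
    spaceRank (𝒴.map (transposeLinearEquiv a b K K).toLinearMap) = spaceRank 𝒴 := by
  unfold spaceRank
  rw [Submodule.map_coe, Set.image_image]
  congr 2
  funext M
  exact rank_transpose M

theorem blowUp_map_transpose (𝒳 : Submodule K (Matrix a b K)) (p q : ℕ) :
    blowUp (𝒳.map (transposeLinearEquiv a b K K).toLinearMap) q p =
      (blowUp 𝒳 p q).map (transposeLinearEquiv _ _ K K).toLinearMap := by
  rw [blowUp, blowUp, Submodule.map_span]
  congr 1
  ext M
  constructor
  · rintro ⟨_, ⟨A, hA, rfl⟩, T, rfl⟩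
    exact ⟨A ⊗ₖ Tᵀ, ⟨A, hA, Tᵀ, rfl⟩, by simp [← kroneckerMap_transpose]⟩
  · rintro ⟨_, ⟨A, hA, T, rfl⟩, rfl⟩
    exact ⟨Aᵀ, ⟨A, hA, rfl⟩, Tᵀ, by simp [← kroneckerMap_transpose]⟩

theorem mul_one_kronecker_mem_blowUp [DecidableEq b] (𝒳 : Submodule K (Matrix a b K))
    {p q q' : ℕ} {M : Matrix (a × Fin p) (b × Fin q) K} (hM : M ∈ blowUp 𝒳 p q)
    (Q : Matrix (Fin q) (Fin q') K) : M * ((1 : Matrix b b K) ⊗ₖ Q) ∈ blowUp 𝒳 p q' := by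
  induction hM using Submodule.span_induction with
  | mem x hx =>
    obtain ⟨A, hA, T, rfl⟩ := hx
    exact Submodule.subset_span ⟨A, hA, T * Q, by rw [← mul_kronecker_mul, Matrix.mul_one]⟩
  | zero => simp
  | add x y _ _ hx hy => simpa [Matrix.add_mul] using add_mem hx hy
  | smul c x _ hx => simpa [Matrix.smul_mul] using smul_mem _ c hx

theorem submatrix_prodMap_mem_blowUp (𝒳 : Submodule K (Matrix a b K))
    {p q q' : ℕ} {M : Matrix (a × Fin p) (b × Fin q) K} (hM : M ∈ blowUp 𝒳 p q)
    (g : Fin q' → Fin q) : M.submatrix id (Prod.map id g) ∈ blowUp 𝒳 p q' := by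
  classical
  rw [submatrix_id_prodMap_eq_mul_one_kronecker]
  exact mul_one_kronecker_mem_blowUp 𝒳 hM _

theorem exists_mem_blowUp_spaceRank_le_rank_and_submatrix [Infinite K]
    (𝒳 : Submodule K (Matrix a b K)) (p q : ℕ) :
    ∃ B ∈ blowUp 𝒳 p (q + 2), spaceRank (blowUp 𝒳 p (q + 2)) ≤ B.rank ∧
      spaceRank (blowUp 𝒳 p q) ≤ (B.submatrix id (Prod.map id (Fin.castAdd 2))).rank := by
  classical
  obtain ⟨A, hA, hrA⟩ := exists_rank_eq_spaceRank (blowUp 𝒳 p q)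
  obtain ⟨B₀, hB₀, hrB₀⟩ := exists_rank_eq_spaceRank (blowUp 𝒳 p (q + 2))
  -- `A` padded with two zero column blocks
  let A' := A * ((1 : Matrix b b K) ⊗ₖ (1 : Matrix (Fin (q + 2)) (Fin (q + 2)) K).submatrix
    (Fin.castAdd 2) id)
  have hA'A : A'.submatrix id (Prod.map id (Fin.castAdd 2)) = A :=
    submatrix_mul_one_kronecker_submatrix_one A (Fin.castAdd_injective q 2)
  obtain ⟨μ, hμ⟩ := ((finite_setOf_rank_add_smul_lt B₀ A').union (finite_setOf_rank_smul_add_lt A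
    (B₀.submatrix id (Prod.map id (Fin.castAdd 2))))).infinite_compl.nonempty
  simp only [Set.mem_compl_iff, Set.mem_union, Set.mem_ofPred_eq, not_or, not_lt] at hμ
  refine ⟨B₀ + μ • A', add_mem hB₀ (smul_mem _ μ (mul_one_kronecker_mem_blowUp 𝒳 hA _)),
    hrB₀ ▸ hμ.1, ?_⟩
  have hfirst : (B₀ + μ • A').submatrix id (Prod.map id (Fin.castAdd 2)) =
      μ • A + B₀.submatrix id (Prod.map id (Fin.castAdd 2)) := by
    rw [← hA'A]
    exact add_comm _ _
  exact hrA ▸ hfirst ▸ hμ.2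

theorem spaceRank_blowUp_concave_cols [Infinite K] (𝒳 : Submodule K (Matrix a b K)) (p q : ℕ) :
    spaceRank (blowUp 𝒳 p q) + spaceRank (blowUp 𝒳 p (q + 2)) ≤
      2 * spaceRank (blowUp 𝒳 p (q + 1)) := by
  obtain ⟨B, hB, hrB, hrBfirst⟩ := exists_mem_blowUp_spaceRank_le_rank_and_submatrix 𝒳 p q
  have hcover : Set.range (Prod.map id Fin.castSucc : b × Fin (q + 1) → b × Fin (q + 2)) ∪
      Set.range (Prod.map id (Fin.succAbove (Fin.last q).castSucc)) = Set.univ := by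
    rw [Set.range_prodMap, Set.range_prodMap, Set.range_id, ← Set.prod_union,
      Fin.range_castSucc_union_range_succAbove, Set.univ_prod_univ]
  have hinter : Set.range (Prod.map id (Fin.castAdd 2) : b × Fin q → b × Fin (q + 2)) ⊆
      Set.range (Prod.map id Fin.castSucc : b × Fin (q + 1) → b × Fin (q + 2)) ∩
        Set.range (Prod.map id (Fin.succAbove (Fin.last q).castSucc)) := by
    rw [Set.range_prodMap, Set.range_prodMap, Set.range_prodMap, Set.range_id, ← Set.prod_inter]
    exact Set.prod_mono subset_rfl
      (Fin.range_castAdd_subset_range_castSucc_inter_range_succAbove q)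
  have hsub := B.rank_add_rank_submatrix_le _ _ _ hcover hinter
  have h₁ := rank_le_spaceRank (submatrix_prodMap_mem_blowUp 𝒳 hB Fin.castSucc)
  have h₂ := rank_le_spaceRank
    (submatrix_prodMap_mem_blowUp 𝒳 hB (Fin.succAbove (Fin.last q).castSucc))
  omega

end BlowUp

theorem statement7_general (K : Type) [Field K] [Infinite K] (k n : ℕ)
    (𝒳 : Submodule K (Matrix (Fin k) (Fin n) K)) (p q : ℕ) :
    spaceRank (blowUp 𝒳 p q) + spaceRank (blowUp 𝒳 p (q + 2)) ≤
      2 * spaceRank (blowUp 𝒳 p (q + 1)) ∧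
    spaceRank (blowUp 𝒳 p q) + spaceRank (blowUp 𝒳 (p + 2) q) ≤
      2 * spaceRank (blowUp 𝒳 (p + 1) q) := by
  refine ⟨spaceRank_blowUp_concave_cols 𝒳 p q, ?_⟩
  simpa only [blowUp_map_transpose, spaceRank_map_transpose] using
    spaceRank_blowUp_concave_cols (𝒳.map (transposeLinearEquiv _ _ K K).toLinearMap) q p

theorem statement7 (K : Type) [Field K] [Infinite K] (k n : ℕ)
    (𝒳 : Submodule K (Matrix (Fin k) (Fin n) K)) (p q : ℕ) (hp : 1 ≤ p) (hq : 1 ≤ q) :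
    spaceRank (blowUp 𝒳 p q) + spaceRank (blowUp 𝒳 p (q + 2)) ≤
      2 * spaceRank (blowUp 𝒳 p (q + 1)) ∧
    spaceRank (blowUp 𝒳 p q) + spaceRank (blowUp 𝒳 (p + 2) q) ≤
      2 * spaceRank (blowUp 𝒳 (p + 1) q) :=
  statement7_general K k n 𝒳 p q
end

section
/- Let K be an infinite field and let 𝒳 ⊆ Mat_{n,n}(K) be a K-linear subspace with rank(𝒳) = 1 (i.e., 𝒳 is nonzero and every matrix in 𝒳 has rank at most 1). Then rank(𝒳^{d}) = d for every d ≥ 1. -/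
open Matrix Kronecker

section Aux

variable {K : Type} [Field K]

/-- Rank of an arbitrary submatrix is at most the rank. -/
lemma rank_submatrix_le'' {l o m n : Type} [Fintype l] [Fintype o] [Fintype m] [Fintype n]
    [DecidableEq m] [DecidableEq n]
    (A : Matrix m n K) (f : l → m) (g : o → n) :
    (A.submatrix f g).rank ≤ A.rank := by
  have hfac : A.submatrix f g =
      ((1 : Matrix m m K).submatrix f id) * A * ((1 : Matrix n n K).submatrix id g) := by
    ext p q
    simp [Matrix.mul_apply, Matrix.one_apply, mul_ite, ite_mul, mul_one, mul_zero, zero_mul,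
      Finset.sum_ite_eq, Finset.sum_ite_eq']
  rw [hfac]
  exact le_trans (Matrix.rank_mul_le_left _ _)
    (Matrix.rank_mul_le_right _ _)

/-- Any 2×2 minor of a matrix of rank ≤ 1 vanishes. -/
lemma minor_eq_zero {m n : Type} [Fintype m] [Fintype n] [DecidableEq m] [DecidableEq n]
    (A : Matrix m n K) (hA : A.rank ≤ 1) (f : Fin 2 → m) (g : Fin 2 → n) :
    (A.submatrix f g).det = 0 := by
  by_contra h
  have hu : IsUnit (A.submatrix f g) :=
    (Matrix.isUnit_iff_isUnit_det _).2 (isUnit_iff_ne_zero.2 h)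
  have h2 : (A.submatrix f g).rank = 2 := by
    rw [Matrix.rank_of_isUnit _ hu]; simp
  have := rank_submatrix_le'' A f g
  omega

/-- If `u` is not a multiple of the nonzero vector `a`, some 2×2 determinant is nonzero. -/
lemma exists_minor_ne {n : Type} (a u : n → K) (ha : a ≠ 0)
    (hu : ¬ ∃ c : K, u = c • a) :
    ∃ i₁ i₂, a i₁ * u i₂ - a i₂ * u i₁ ≠ 0 := by
  by_contra h
  push_neg at h
  obtain ⟨i₀, hi₀⟩ : ∃ i₀, a i₀ ≠ 0 := by
    by_contra h'; push_neg at h'; exact ha (funext h')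
  refine hu ⟨u i₀ / a i₀, funext fun i => ?_⟩
  have h0 := h i i₀
  show u i = ((u i₀ / a i₀) • a) i
  simp only [Pi.smul_apply, smul_eq_mul]
  field_simp
  linear_combination -h0

/-- A nonzero matrix of rank ≤ 1 is an outer product of two nonzero vectors. -/
lemma exists_vecMulVec {m n : Type} [Fintype m] [Fintype n] [DecidableEq m] [DecidableEq n]
    (A : Matrix m n K) (hA0 : A ≠ 0) (hA : A.rank ≤ 1) :
    ∃ u v, u ≠ 0 ∧ v ≠ 0 ∧ A = Matrix.vecMulVec u v := by
  obtain ⟨i₀, j₀, hij⟩ : ∃ i₀ j₀, A i₀ j₀ ≠ 0 := by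
    by_contra h'; push_neg at h'
    exact hA0 (by ext i j; exact h' i j)
  have minors : ∀ i j, A i j * A i₀ j₀ - A i j₀ * A i₀ j = 0 := by
    intro i j
    have := minor_eq_zero A hA ![i, i₀] ![j, j₀]
    rw [Matrix.det_fin_two] at this
    simpa using this
  refine ⟨fun i => A i j₀, fun j => A i₀ j / A i₀ j₀, ?_, ?_, ?_⟩
  · intro h
    exact hij (by simpa using congrFun h i₀)
  · intro h
    have := congrFun h j₀
    simp [div_self hij] at this
  · ext i j
    have h1 := minors i j
    rw [Matrix.vecMulVec_apply]
    field_simp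
    linear_combination h1

/-- Key rank bound: a matrix whose entries factor through `a` on rows has rank ≤ d. -/
lemma rank_le_of_factor {n d : ℕ} {β : Type} [Fintype β] (a : Fin n → K)
    (N : Matrix (Fin d) β K) (M : Matrix (Fin n × Fin d) β K)
    (h : ∀ p q, M p q = a p.1 * N p.2 q) : M.rank ≤ d := by
  have hfac : M = (Matrix.of fun (p : Fin n × Fin d) (s : Fin d) =>
      a p.1 * (1 : Matrix (Fin d) (Fin d) K) p.2 s) * N := by
    ext p q
    rw [h]
    simp [Matrix.mul_apply, Matrix.one_apply, mul_ite, ite_mul, mul_one, mul_zero, zero_mul,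
      mul_assoc, Finset.sum_ite_eq, Finset.sum_ite_eq']
  rw [hfac]
  exact le_trans (Matrix.rank_mul_le_right _ _) (by simpa using Matrix.rank_le_card_height N)

end Aux

theorem statement10 (K : Type) [Field K] [Infinite K] (n : ℕ)
    (𝒳 : Submodule K (Matrix (Fin n) (Fin n) K))
    (h𝒳 : 𝒳 ≠ ⊥) (hrank : ∀ A ∈ 𝒳, Matrix.rank A ≤ 1)
    (d : ℕ) (hd : 1 ≤ d) :
    spaceRank (blowUp 𝒳 d d) = d := by
  classical
  -- a nonzero element of 𝒳
  obtain ⟨A₀, hA₀mem, hA₀⟩ := Submodule.exists_mem_ne_zero_of_ne_bot h𝒳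
  obtain ⟨a, b, ha, hb, hab⟩ := exists_vecMulVec A₀ hA₀ (hrank A₀ hA₀mem)
  -- Structure dichotomy for 𝒳
  have key : ∀ X ∈ 𝒳, (∃ c, X = Matrix.vecMulVec a c) ∨ (∃ c, X = Matrix.vecMulVec c b) := by
    intro X hX
    by_cases hX0 : X = 0
    · exact Or.inl ⟨0, by ext i j; simp [hX0, Matrix.vecMulVec_apply]⟩
    obtain ⟨u, v, hu, hv, huv⟩ := exists_vecMulVec X hX0 (hrank X hX)
    by_cases hcu : ∃ c : K, u = c • a
    · obtain ⟨c, rfl⟩ := hcu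
      exact Or.inl ⟨c • v, by ext i j; simp [huv, Matrix.vecMulVec_apply]; ring⟩
    by_cases hcv : ∃ c : K, v = c • b
    · obtain ⟨c, rfl⟩ := hcv
      exact Or.inr ⟨c • u, by ext i j; simp [huv, Matrix.vecMulVec_apply]; ring⟩
    exfalso
    obtain ⟨i₁, i₂, hi⟩ := exists_minor_ne a u ha hcu
    obtain ⟨j₁, j₂, hj⟩ := exists_minor_ne b v hb hcv
    have hmem : A₀ + X ∈ 𝒳 := 𝒳.add_mem hA₀mem hX
    have hmin := minor_eq_zero (A₀ + X) (hrank _ hmem) ![i₁, i₂] ![j₁, j₂]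
    rw [Matrix.det_fin_two] at hmin
    simp only [Matrix.submatrix_apply, Matrix.add_apply, hab, huv,
      Matrix.vecMulVec_apply, Matrix.cons_val_zero, Matrix.cons_val_one, Matrix.head_cons] at hmin
    have : (a i₁ * u i₂ - a i₂ * u i₁) * (b j₁ * v j₂ - b j₂ * v j₁) = 0 := by
      linear_combination hmin
    rcases mul_eq_zero.mp this with h | h
    · exact hi h
    · exact hj h
  have struct : (∃ a₀ : Fin n → K, ∀ X ∈ 𝒳, ∃ c, X = Matrix.vecMulVec a₀ c) ∨
      (∃ b₀ : Fin n → K, ∀ X ∈ 𝒳, ∃ c, X = Matrix.vecMulVec c b₀) := by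
    by_cases hL : ∀ X ∈ 𝒳, ∃ c, X = Matrix.vecMulVec a c
    · exact Or.inl ⟨a, hL⟩
    push_neg at hL
    obtain ⟨X₁, hX₁mem, hX₁⟩ := hL
    have hX₁' : ¬ ∃ c, X₁ = Matrix.vecMulVec a c := by rintro ⟨c, hc⟩; exact hX₁ c hc
    obtain ⟨u₁, hu₁⟩ := (key X₁ hX₁mem).resolve_left hX₁'
    have hu₁span : ¬ ∃ c : K, u₁ = c • a := by
      rintro ⟨c, rfl⟩
      exact hX₁ (c • b) (by ext i j; simp [hu₁, Matrix.vecMulVec_apply]; ring)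
    refine Or.inr ⟨b, fun X hX => ?_⟩
    rcases key X hX with ⟨c, rfl⟩ | h
    · by_cases hcb : ∃ μ : K, c = μ • b
      · obtain ⟨μ, rfl⟩ := hcb
        exact ⟨μ • a, by ext i j; simp [Matrix.vecMulVec_apply]; ring⟩
      exfalso
      obtain ⟨i₁, i₂, hi⟩ := exists_minor_ne a u₁ ha hu₁span
      obtain ⟨j₁, j₂, hj⟩ := exists_minor_ne b c hb hcb
      have hmem : Matrix.vecMulVec a c + X₁ ∈ 𝒳 := 𝒳.add_mem hX hX₁mem
      have hmin := minor_eq_zero _ (hrank _ hmem) ![i₁, i₂] ![j₁, j₂]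
      rw [Matrix.det_fin_two] at hmin
      simp only [Matrix.submatrix_apply, Matrix.add_apply, hu₁,
        Matrix.vecMulVec_apply, Matrix.cons_val_zero, Matrix.cons_val_one, Matrix.head_cons] at hmin
      have : (a i₁ * u₁ i₂ - a i₂ * u₁ i₁) * (c j₁ * b j₂ - c j₂ * b j₁) = 0 := by
        linear_combination hmin
      rcases mul_eq_zero.mp this with h | h
      · exact hi h
      · exact hj (by linear_combination -h)
    · exact h
  -- Upper bound: every member of the blow-up has rank ≤ d
  have upper : ∀ M ∈ blowUp 𝒳 d d, Matrix.rank M ≤ d := by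
    rcases struct with ⟨a₀, hcol⟩ | ⟨b₀, hrow⟩
    · intro M hM
      have : ∃ N : Matrix (Fin d) (Fin n × Fin d) K, ∀ p q, M p q = a₀ p.1 * N p.2 q := by
        refine Submodule.span_induction
          (p := fun M _ => ∃ N : Matrix (Fin d) (Fin n × Fin d) K, ∀ p q, M p q = a₀ p.1 * N p.2 q)
          ?_ ?_ ?_ ?_ hM
        · rintro M ⟨A, hA, T, rfl⟩
          obtain ⟨c, rfl⟩ := hcol A hA
          refine ⟨Matrix.of fun s q => c q.1 * T s q.2, fun p q => ?_⟩
          simp [Matrix.kroneckerMap_apply, Matrix.vecMulVec_apply]; ring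
        · exact ⟨0, by simp⟩
        · rintro x y _ _ ⟨N₁, h₁⟩ ⟨N₂, h₂⟩
          exact ⟨N₁ + N₂, fun p q => by simp [h₁, h₂]; ring⟩
        · rintro r x _ ⟨N, hN⟩
          exact ⟨r • N, fun p q => by simp [hN]; ring⟩
      obtain ⟨N, hN⟩ := this
      exact rank_le_of_factor a₀ N M hN
    · intro M hM
      have : ∃ N : Matrix (Fin d) (Fin n × Fin d) K, ∀ p q, Mᵀ p q = b₀ p.1 * N p.2 q := by
        refine Submodule.span_induction
          (p := fun M _ => ∃ N : Matrix (Fin d) (Fin n × Fin d) K,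
            ∀ p q, Mᵀ p q = b₀ p.1 * N p.2 q)
          ?_ ?_ ?_ ?_ hM
        · rintro M ⟨A, hA, T, rfl⟩
          obtain ⟨c, rfl⟩ := hrow A hA
          refine ⟨Matrix.of fun t q => c q.1 * T q.2 t, fun p q => ?_⟩
          simp [Matrix.transpose_apply, Matrix.kroneckerMap_apply, Matrix.vecMulVec_apply]; ring
        · exact ⟨0, by simp⟩
        · rintro x y _ _ ⟨N₁, h₁⟩ ⟨N₂, h₂⟩
          refine ⟨N₁ + N₂, fun p q => ?_⟩
          have e₁ := h₁ p q; have e₂ := h₂ p q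
          simp only [Matrix.transpose_apply, Matrix.add_apply] at e₁ e₂ ⊢
          rw [e₁, e₂]; ring
        · rintro r x _ ⟨N, hN⟩
          refine ⟨r • N, fun p q => ?_⟩
          have e := hN p q
          simp only [Matrix.transpose_apply, Matrix.smul_apply, smul_eq_mul] at e ⊢
          rw [e]; ring
      obtain ⟨N, hN⟩ := this
      have := rank_le_of_factor b₀ N Mᵀ hN
      rwa [Matrix.rank_transpose] at this
  -- Lower bound witness: A₀ ⊗ₖ 1 has rank exactly d
  set M₀ : Matrix (Fin n × Fin d) (Fin n × Fin d) K := A₀ ⊗ₖ (1 : Matrix (Fin d) (Fin d) K)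
    with hM₀def
  have hM₀mem : M₀ ∈ blowUp 𝒳 d d :=
    Submodule.subset_span ⟨A₀, hA₀mem, 1, rfl⟩
  obtain ⟨i₀, hi₀⟩ : ∃ i₀, a i₀ ≠ 0 := by
    by_contra h'; push_neg at h'; exact ha (funext h')
  obtain ⟨j₀, hj₀⟩ : ∃ j₀, b j₀ ≠ 0 := by
    by_contra h'; push_neg at h'; exact hb (funext h')
  have hent : A₀ i₀ j₀ ≠ 0 := by
    rw [hab, Matrix.vecMulVec_apply]; exact mul_ne_zero hi₀ hj₀
  have hsub : M₀.submatrix (fun s : Fin d => (i₀, s)) (fun t : Fin d => (j₀, t)) =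
      A₀ i₀ j₀ • (1 : Matrix (Fin d) (Fin d) K) := by
    ext s t
    simp [hM₀def, Matrix.kroneckerMap_apply, Matrix.one_apply, Matrix.smul_apply, smul_eq_mul]
  have hlow : d ≤ M₀.rank := by
    have hunit : IsUnit (A₀ i₀ j₀ • (1 : Matrix (Fin d) (Fin d) K)) := by
      rw [Matrix.isUnit_iff_isUnit_det, Matrix.det_smul, Matrix.det_one, mul_one]
      exact isUnit_iff_ne_zero.2 (pow_ne_zero _ hent)
    have h1 : (A₀ i₀ j₀ • (1 : Matrix (Fin d) (Fin d) K)).rank = d := by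
      rw [Matrix.rank_of_isUnit _ hunit]; simp
    calc d = (A₀ i₀ j₀ • (1 : Matrix (Fin d) (Fin d) K)).rank := h1.symm
      _ = (M₀.submatrix (fun s : Fin d => (i₀, s)) (fun t : Fin d => (j₀, t))).rank := by
          rw [hsub]
      _ ≤ M₀.rank := rank_submatrix_le'' _ _ _
  have hM₀rank : M₀.rank = d := le_antisymm (upper M₀ hM₀mem) hlow
  -- Conclude
  have hbdd : ∀ r ∈ Matrix.rank ''
      (blowUp 𝒳 d d : Set (Matrix (Fin n × Fin d) (Fin n × Fin d) K)), r ≤ d := by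
    rintro r ⟨M, hM, rfl⟩
    exact upper M hM
  have hmemd : (d : ℕ) ∈ Matrix.rank ''
      (blowUp 𝒳 d d : Set (Matrix (Fin n × Fin d) (Fin n × Fin d) K)) :=
    ⟨M₀, hM₀mem, hM₀rank⟩
  exact le_antisymm (csSup_le ⟨d, hmemd⟩ hbdd) (le_csSup ⟨d, hbdd⟩ hmemd)
end

section
/- Let K be an infinite field, let X₁,…,X_m ∈ Mat_{n,n}(K), and let d ≥ 1. If there exist T₁,…,T_m ∈ Mat_{d,d}(K) such that X₁⊗T₁ + X₂⊗T₂ + ⋯ + X_m⊗T_m is invertible, then there exist S₂,…,S_m ∈ Mat_{d,d}(K) such that X₁⊗I_d + X₂⊗S₂ + ⋯ + X_m⊗S_m is invertible, where I_d is the d×d identity matrix. -/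
open Matrix Kronecker Polynomial

theorem statement14 (K : Type) [Field K] [Infinite K] (n m d : ℕ) (hm : 0 < m) (hd : 1 ≤ d)
    (X : Fin m → Matrix (Fin n) (Fin n) K)
    (T : Fin m → Matrix (Fin d) (Fin d) K)
    (h : IsUnit (∑ i, X i ⊗ₖ T i)) :
    ∃ S : Fin m → Matrix (Fin d) (Fin d) K,
      S ⟨0, hm⟩ = (1 : Matrix (Fin d) (Fin d) K) ∧ IsUnit (∑ i, X i ⊗ₖ S i) := by
  classical
  set i0 : Fin m := ⟨0, hm⟩
  -- polynomial matrices
  set M : Matrix (Fin n × Fin d) (Fin n × Fin d) K[X] :=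
    (∑ i, X i ⊗ₖ T i).map C + (Polynomial.X : K[X]) • ((X i0 ⊗ₖ (1 : Matrix (Fin d) (Fin d) K)).map C)
    with hM
  set p : K[X] := M.det with hp
  set q : K[X] := ((T i0).map C + (Polynomial.X : K[X]) • (1 : Matrix (Fin d) (Fin d) K[X])).det with hq
  have hmapeval : ∀ (t : K) (A : Matrix (Fin n × Fin d) (Fin n × Fin d) K),
      (A.map C).map (eval t) = A := by
    intro t A; ext i j; simp
  have hpeval : ∀ t : K, eval t p =
      ((∑ i, X i ⊗ₖ T i) + t • (X i0 ⊗ₖ (1 : Matrix (Fin d) (Fin d) K))).det := by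
    intro t
    have := (evalRingHom t).map_det M
    simp only [coe_evalRingHom] at this
    rw [hp, this]
    congr 1
    rw [RingHom.mapMatrix_apply]
    ext i j
    simp [hM, Matrix.add_apply, Matrix.smul_apply, Matrix.map_apply, smul_eq_mul]
  have hqeval : ∀ t : K, eval t q = ((T i0) + t • (1 : Matrix (Fin d) (Fin d) K)).det := by
    intro t
    have := (evalRingHom t).map_det ((T i0).map C + (Polynomial.X : K[X]) • (1 : Matrix (Fin d) (Fin d) K[X]))
    simp only [coe_evalRingHom] at this
    rw [hq, this]
    congr 1
    rw [RingHom.mapMatrix_apply]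
    ext i j
    simp [Matrix.add_apply, Matrix.smul_apply, Matrix.map_apply, Matrix.one_apply,
      apply_ite (eval t), smul_eq_mul]
  have hp0 : p ≠ 0 := by
    intro h0
    have := hpeval 0
    rw [h0] at this
    simp only [eval_zero, zero_smul, add_zero] at this
    have hdet : IsUnit (∑ i, X i ⊗ₖ T i).det := (Matrix.isUnit_iff_isUnit_det _).mp h
    rw [← this] at hdet
    exact hdet.ne_zero rfl
  have hq0 : q ≠ 0 := by
    -- q = charpoly of -(T i0) essentially; show it's nonzero via leading behaviour
    have : q = (-(T i0)).charpoly := by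
      rw [hq, Matrix.charpoly, Matrix.charmatrix]
      congr 1
      ext i j
      by_cases hij : i = j <;>
        simp [Matrix.scalar_apply, Matrix.one_apply, Matrix.diagonal_apply, hij,
          Matrix.sub_apply, smul_eq_mul, sub_neg_eq_add, add_comm]
    rw [this]
    exact (Matrix.charpoly_monic _).ne_zero
  -- find a good point t₀
  obtain ⟨t₀, ht₀⟩ : ∃ t : K, eval t (p * q) ≠ 0 := by
    by_contra hc
    push_neg at hc
    exact mul_ne_zero hp0 hq0 (zero_of_eval_zero _ hc)
  rw [eval_mul] at ht₀
  have hpt : eval t₀ p ≠ 0 := fun hz => ht₀ (by rw [hz, zero_mul])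
  have hqt : eval t₀ q ≠ 0 := fun hz => ht₀ (by rw [hz, mul_zero])
  set A : Matrix (Fin d) (Fin d) K := T i0 + t₀ • 1 with hA
  have hAdet : IsUnit A.det := by
    rw [hqeval] at hqt; exact (Ne.isUnit hqt)
  set T' : Fin m → Matrix (Fin d) (Fin d) K := fun i => if i = i0 then A else T i with hT'
  have hNdet : IsUnit (∑ i, X i ⊗ₖ T' i) := by
    rw [Matrix.isUnit_iff_isUnit_det]
    have hsum : (∑ i, X i ⊗ₖ T' i) =
        (∑ i, X i ⊗ₖ T i) + t₀ • (X i0 ⊗ₖ (1 : Matrix (Fin d) (Fin d) K)) := by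
      have : ∀ i, X i ⊗ₖ T' i = X i ⊗ₖ T i + (if i = i0 then t₀ • (X i0 ⊗ₖ (1 : Matrix (Fin d) (Fin d) K)) else 0) := by
        intro i
        by_cases hi : i = i0
        · subst hi
          simp [hT', hA, Matrix.kronecker_add, Matrix.kronecker_smul]
        · simp [hT', hi]
      rw [Finset.sum_congr rfl (fun i _ => this i), Finset.sum_add_distrib]
      congr 1
      simp
    rw [hsum, ← hpeval]
    exact Ne.isUnit hpt
  refine ⟨fun i => T' i * A⁻¹, ?_, ?_⟩
  · simp only [hT', if_pos rfl]
    exact Matrix.mul_nonsing_inv A hAdet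
  · have : (∑ i, X i ⊗ₖ (T' i * A⁻¹)) =
        (∑ i, X i ⊗ₖ T' i) * ((1 : Matrix (Fin n) (Fin n) K) ⊗ₖ A⁻¹) := by
      rw [Finset.sum_mul]
      refine Finset.sum_congr rfl fun i _ => ?_
      rw [← Matrix.mul_kronecker_mul, mul_one]
    rw [this]
    refine hNdet.mul ?_
    have hinv : ((1 : Matrix (Fin n) (Fin n) K) ⊗ₖ A⁻¹) * ((1 : Matrix (Fin n) (Fin n) K) ⊗ₖ A) = 1 := by
      rw [← Matrix.mul_kronecker_mul, mul_one, Matrix.nonsing_inv_mul A hAdet, Matrix.one_kronecker_one]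
    have hinv2 : ((1 : Matrix (Fin n) (Fin n) K) ⊗ₖ A) * ((1 : Matrix (Fin n) (Fin n) K) ⊗ₖ A⁻¹) = 1 := by
      rw [← Matrix.mul_kronecker_mul, mul_one, Matrix.mul_nonsing_inv A hAdet, Matrix.one_kronecker_one]
    exact ⟨⟨_, _, hinv, hinv2⟩, rfl⟩
end
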